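/- arXiv:2009.06038 — 9 statements merged into one kernel-verified Lean document; each statement's English description precedes it below -/
import Mathlib

section
/- Let ρ be a symmetric linear operator (Ricci) on an n-dimensional real inner product space with trace S (scalar curvature), and for a real k define Ein_k = S·id − k·ρ. If 0 < k < l < n and Ein_l is positive definite, then Ein_k is positive definite and S > 0. -/
open RealInnerProductSpace

/-!
Taking traces, `trace (S • id - l • ρ) = (n - l) S`, and the trace of a positive definite
operator is positive, so `S > 0`. For fixed `v`, the quadratic form `⟪(S • id - k • ρ) v, v⟫`
is affine in `k`; it is positive at `k = 0` because `S > 0` and at `k = l` by hypothesis,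
hence on all of `[0, l]`.
-/

namespace LinearMap

variable {E : Type*} [NormedAddCommGroup E] [InnerProductSpace ℝ E]

theorem trace_pos_of_inner_pos [FiniteDimensional ℝ E] [Nontrivial E] {T : E →ₗ[ℝ] E}
    (hT : ∀ v : E, v ≠ 0 → 0 < ⟪T v, v⟫) : 0 < trace ℝ E T := by
  let b := stdOrthonormalBasis ℝ E
  have : Nonempty (Fin (Module.finrank ℝ E)) := ⟨⟨0, Module.finrank_pos⟩⟩
  rw [trace_eq_sum_inner T b]
  exact Finset.sum_pos (fun i _ ↦ real_inner_comm (T (b i)) (b i) ▸ hT _ (b.orthonormal.ne_zero i))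
    Finset.univ_nonempty

theorem trace_smul_id_sub_smul [FiniteDimensional ℝ E] (S l : ℝ) (ρ : E →ₗ[ℝ] E) :
    trace ℝ E (S • LinearMap.id - l • ρ) = Module.finrank ℝ E * S - l * trace ℝ E ρ := by
  simp only [map_sub, map_smul, trace_id, smul_eq_mul]
  ring

theorem inner_smul_id_sub_smul_apply (S k : ℝ) (ρ : E →ₗ[ℝ] E) (v : E) :
    ⟪(S • LinearMap.id - k • ρ : E →ₗ[ℝ] E) v, v⟫ = S * ⟪v, v⟫ - k * ⟪ρ v, v⟫ := by
  simp only [sub_apply, smul_apply, id_apply, inner_sub_left, real_inner_smul_left]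

theorem inner_smul_id_sub_smul_pos_of_le {S k l : ℝ} (hS : 0 < S) (hk : 0 ≤ k) (hkl : k ≤ l)
    (ρ : E →ₗ[ℝ] E) {v : E} (hv : v ≠ 0)
    (hl : 0 < ⟪(S • LinearMap.id - l • ρ : E →ₗ[ℝ] E) v, v⟫) :
    0 < ⟪(S • LinearMap.id - k • ρ : E →ₗ[ℝ] E) v, v⟫ := by
  rw [inner_smul_id_sub_smul_apply] at hl ⊢
  have hvv : 0 < ⟪v, v⟫ := real_inner_self_pos.mpr hv
  rcases le_or_gt ⟪ρ v, v⟫ 0 with hρv | hρv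
  · nlinarith
  · nlinarith

end LinearMap

theorem stmt_0_general {E : Type*} [NormedAddCommGroup E] [InnerProductSpace ℝ E]
    [FiniteDimensional ℝ E] {n : ℕ} (hn : Module.finrank ℝ E = n)
    (ρ : E →ₗ[ℝ] E) (S : ℝ) (hS : S = LinearMap.trace ℝ E ρ)
    {k l : ℝ} (hk : 0 < k) (hkl : k < l) (hl : l < n)
    (hposl : ∀ v : E, v ≠ 0 →
      0 < ⟪(S • (LinearMap.id : E →ₗ[ℝ] E) - l • ρ) v, v⟫) :
    (∀ v : E, v ≠ 0 →
      0 < ⟪(S • (LinearMap.id : E →ₗ[ℝ] E) - k • ρ) v, v⟫) ∧ 0 < S := by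
  have : Nontrivial E := Module.finrank_pos_iff.mp <| by
    rw [hn]; exact_mod_cast (hk.trans hkl).trans hl
  have htrace := LinearMap.trace_pos_of_inner_pos hposl
  rw [LinearMap.trace_smul_id_sub_smul, ← hS, hn, ← sub_mul] at htrace
  have hSpos : 0 < S := pos_of_mul_pos_right htrace (sub_pos.mpr hl).le
  exact ⟨fun v hv ↦ LinearMap.inner_smul_id_sub_smul_pos_of_le hSpos hk.le hkl.le ρ hv (hposl v hv),
    hSpos⟩

/-- If `0 < k < l < n` and `Ein_l = S•id - l•ρ` is positive definite,
then `Ein_k` is positive definite and `S > 0`. -/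
theorem stmt_0 {E : Type*} [NormedAddCommGroup E] [InnerProductSpace ℝ E]
    [FiniteDimensional ℝ E] {n : ℕ} (hn : Module.finrank ℝ E = n) (hn1 : 1 ≤ n)
    (ρ : E →ₗ[ℝ] E) (hρ : ρ.IsSymmetric) (S : ℝ) (hS : S = LinearMap.trace ℝ E ρ)
    {k l : ℝ} (hk : 0 < k) (hkl : k < l) (hl : l < n)
    (hposl : ∀ v : E, v ≠ 0 →
      0 < ⟪(S • (LinearMap.id : E →ₗ[ℝ] E) - l • ρ) v, v⟫) :
    (∀ v : E, v ≠ 0 →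
      0 < ⟪(S • (LinearMap.id : E →ₗ[ℝ] E) - k • ρ) v, v⟫) ∧ 0 < S :=
  stmt_0_general hn ρ S hS hk hkl hl hposl
end

section
/- Let ρ be a symmetric operator on an n-dimensional real inner product space with trace S and Ein_k = S·id − k·ρ. For an integer k with 1 ≤ k ≤ n−1, the operator ρ is (n−k)-positive (the sum of its lowest n−k eigenvalues is positive) if and only if Ein_k is k-positive (the sum of its lowest k eigenvalues is positive). -/
open RealInnerProductSpace

namespace Finset

variable {ι : Type*} [Fintype ι] [DecidableEq ι]

theorem sum_sum_sub_mul_eq_mul_sum_compl (μ : ι → ℝ) {k : ℕ} {s : Finset ι} (hs : #s = k) :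
    ∑ i ∈ s, (∑ j, μ j - k * μ i) = k * ∑ i ∈ sᶜ, μ i := by
  rw [sum_sub_distrib, sum_const, hs, nsmul_eq_mul, ← mul_sum, ← mul_sub,
    ← sum_add_sum_compl s μ, add_sub_cancel_left]

theorem forall_card_compl_iff {k : ℕ} (hk : k ≤ Fintype.card ι) (P : Finset ι → Prop) :
    (∀ s : Finset ι, #s = k → P sᶜ) ↔ ∀ t : Finset ι, #t = Fintype.card ι - k → P t := by
  constructor
  · intro h t ht
    simpa using h tᶜ (by rw [card_compl, ht]; omega)
  · intro h s hs
    exact h sᶜ (by rw [card_compl, hs])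

/-- Sums of `k` of the numbers `∑ μ - k μ i` are `k` times the sums of the other `card ι - k`
numbers `μ j`, so both families are positive together. -/
theorem forall_card_sum_pos_iff_forall_card_sum_sub_mul_pos (μ : ι → ℝ) {k : ℕ} (hk0 : 0 < k)
    (hk : k ≤ Fintype.card ι) :
    (∀ s : Finset ι, #s = Fintype.card ι - k → 0 < ∑ i ∈ s, μ i) ↔
      ∀ s : Finset ι, #s = k → 0 < ∑ i ∈ s, (∑ j, μ j - k * μ i) := by
  have hk0' : (0 : ℝ) < k := by exact_mod_cast hk0
  rw [← forall_card_compl_iff hk (fun t ↦ 0 < ∑ i ∈ t, μ i)]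
  refine forall_congr' fun s ↦ forall_congr' fun hs ↦ ?_
  rw [sum_sum_sub_mul_eq_mul_sum_compl μ hs, mul_pos_iff_of_pos_left hk0']

end Finset

/-- For an integer `1 ≤ k ≤ n-1`, `ρ` is `(n-k)`-positive (every sum of
`n-k` of its eigenvalues is positive, equivalently the sum of the lowest `n-k` is)
iff `Ein_k = S•id - k•ρ` is `k`-positive; the eigenvalues of `Ein_k` are `S - k•μ i`. -/
theorem stmt_2 {E : Type*} [NormedAddCommGroup E] [InnerProductSpace ℝ E]
    [FiniteDimensional ℝ E] {n : ℕ} (hn : Module.finrank ℝ E = n)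
    (ρ : E →ₗ[ℝ] E) (hρ : ρ.IsSymmetric) (S : ℝ) (hS : S = LinearMap.trace ℝ E ρ)
    {k : ℕ} (hk1 : 1 ≤ k) (hk2 : k ≤ n - 1)
    (μ : Fin n → ℝ) (hμ : μ = hρ.eigenvalues hn) :
    (∀ s : Finset (Fin n), s.card = n - k → 0 < ∑ i ∈ s, μ i) ↔
      (∀ s : Finset (Fin n), s.card = k → 0 < ∑ i ∈ s, (S - (k : ℝ) * μ i)) := by
  have hS_sum : S = ∑ i, μ i := by
    rw [hS, hμ, hρ.trace_eq_sum_eigenvalues hn]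
    rfl
  have hkn : k ≤ Fintype.card (Fin n) := by rw [Fintype.card_fin]; omega
  rw [hS_sum]
  simpa only [Fintype.card_fin] using
    Finset.forall_card_sum_pos_iff_forall_card_sum_sub_mul_pos μ hk1 hkn
end

section
/- Let ρ be a symmetric operator on an n-dimensional real inner product space with trace S and Ein_k = S·id − k·ρ. For an integer k with 0 ≤ k ≤ n−1, if Ein_k is positive definite then ρ has at least k+1 positive eigenvalues. -/
/-!
Evaluating the positive definite form `S • id - k • ρ` on a unit eigenvector of eigenvalue `μᵢ`
gives `k μᵢ < S` for every `i`. Summing over all `n > k` eigenvalues shows `S > 0`. Since `S` is at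
most the sum of the `p` positive eigenvalues, summing `k μᵢ < S` over those gives `k S < p S`,
hence `k < p`.
-/

open Finset RealInnerProductSpace

section FamilyOfReals

variable {ι : Type*} [Fintype ι] {μ : ι → ℝ} {k : ℕ}

theorem sum_pos_of_forall_mul_lt_sum (hk : k < Fintype.card ι)
    (h : ∀ i, k * μ i < ∑ j, μ j) : 0 < ∑ j, μ j := by
  have hne : (univ : Finset ι).Nonempty :=
    univ_nonempty_iff.mpr (Fintype.card_pos_iff.mp (by omega))
  have hsum : (k : ℝ) * ∑ j, μ j < Fintype.card ι * ∑ j, μ j := by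
    simpa [mul_sum] using sum_lt_sum_of_nonempty hne fun i _ => h i
  have hk' : (k : ℝ) < Fintype.card ι := by exact_mod_cast hk
  nlinarith

theorem sum_le_sum_filter_pos : ∑ j, μ j ≤ ∑ j ∈ univ.filter (fun j => 0 < μ j), μ j := by
  rw [← sum_filter_add_sum_filter_not univ (fun j => 0 < μ j)]
  have : ∑ j ∈ univ.filter (fun j => ¬0 < μ j), μ j ≤ 0 :=
    sum_nonpos fun j hj => not_lt.mp (mem_filter.mp hj).2
  linarith

theorem lt_card_filter_pos_of_forall_mul_lt_sum (hk : k < Fintype.card ι)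
    (h : ∀ i, k * μ i < ∑ j, μ j) : k < #(univ.filter fun i => 0 < μ i) := by
  set P := univ.filter fun i => 0 < μ i
  have hS := sum_pos_of_forall_mul_lt_sum hk h
  have hSP : ∑ j, μ j ≤ ∑ j ∈ P, μ j := sum_le_sum_filter_pos
  have hP : P.Nonempty := by
    rw [nonempty_iff_ne_empty]
    rintro hP
    rw [hP, sum_empty] at hSP
    linarith
  have hPS : (k : ℝ) * ∑ j ∈ P, μ j < #P * ∑ j, μ j := by
    simpa [mul_sum] using sum_lt_sum_of_nonempty hP fun i _ => h i
  have hkS : (k : ℝ) * ∑ j, μ j ≤ k * ∑ j ∈ P, μ j := by gcongr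
  have : (k : ℝ) < #P := lt_of_mul_lt_mul_right (hkS.trans_lt hPS) hS.le
  exact_mod_cast this

end FamilyOfReals

namespace LinearMap.IsSymmetric

variable {E : Type*} [NormedAddCommGroup E] [InnerProductSpace ℝ E] [FiniteDimensional ℝ E]
  {n : ℕ} {T : E →ₗ[ℝ] E}

theorem inner_apply_eigenvectorBasis (hT : T.IsSymmetric) (hn : Module.finrank ℝ E = n)
    (i : Fin n) :
    ⟪T (hT.eigenvectorBasis hn i), hT.eigenvectorBasis hn i⟫ = hT.eigenvalues hn i := by
  rw [hT.apply_eigenvectorBasis, real_inner_smul_left, real_inner_self_eq_norm_sq,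
    (hT.eigenvectorBasis hn).orthonormal.1 i]
  simp

theorem mul_eigenvalues_lt_of_forall_inner_pos (hT : T.IsSymmetric)
    (hn : Module.finrank ℝ E = n) {s c : ℝ}
    (hpos : ∀ v : E, v ≠ 0 → 0 < ⟪(s • (LinearMap.id : E →ₗ[ℝ] E) - c • T) v, v⟫)
    (i : Fin n) : c * hT.eigenvalues hn i < s := by
  set b := hT.eigenvectorBasis hn
  have hb : b i ≠ 0 := b.orthonormal.ne_zero i
  have := hpos (b i) hb
  rw [sub_apply, smul_apply, smul_apply, id_apply, inner_sub_left, real_inner_smul_left,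
    real_inner_smul_left, hT.inner_apply_eigenvectorBasis, real_inner_self_eq_norm_sq,
    b.orthonormal.1 i] at this
  linarith

end LinearMap.IsSymmetric

/-- For an integer `0 ≤ k ≤ n-1`, if `Ein_k = S•id - k•ρ` is positive
definite then `ρ` has at least `k+1` positive eigenvalues. -/
theorem stmt_3 {E : Type*} [NormedAddCommGroup E] [InnerProductSpace ℝ E]
    [FiniteDimensional ℝ E] {n : ℕ} (hn : Module.finrank ℝ E = n)
    (ρ : E →ₗ[ℝ] E) (hρ : ρ.IsSymmetric) (S : ℝ) (hS : S = LinearMap.trace ℝ E ρ)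
    {k : ℕ} (hk : k ≤ n - 1) (hn1 : 1 ≤ n)
    (μ : Fin n → ℝ) (hμ : μ = hρ.eigenvalues hn)
    (hpos : ∀ v : E, v ≠ 0 →
      0 < ⟪(S • (LinearMap.id : E →ₗ[ℝ] E) - (k : ℝ) • ρ) v, v⟫) :
    k + 1 ≤ (Finset.univ.filter fun i => 0 < μ i).card := by
  have hkn : k < Fintype.card (Fin n) := by rw [Fintype.card_fin]; omega
  have htrace : S = ∑ i, μ i := by rw [hS, hμ, hρ.trace_eq_sum_eigenvalues hn]; rfl
  refine lt_card_filter_pos_of_forall_mul_lt_sum hkn fun i => ?_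
  rw [← htrace, hμ]
  exact hρ.mul_eigenvalues_lt_of_forall_inner_pos hn hpos i
end

section
/- Let ρ be a symmetric operator on an n-dimensional real inner product space with trace S, and Ein_k = S·id − k·ρ. If Ein_k is positive definite for some k with 0 < k < n−1, then Ein_k is (n−1)-positive, and hence Ein_{−k/(n−1−k)} is positive definite. -/
/-!
Completing a unit vector `u` to an orthonormal basis splits `tr A` as `⟪A u, u⟫` plus the sum
of `⟪A w, w⟫` over the remaining orthonormal `(n - 1)`-frame. Hence if `A` is `(n - 1)`-positive,
`⟪t₁(A) u, u⟫ = tr A - ⟪A u, u⟫ > 0`, i.e. `t₁(A) = tr A • id - A` is positive definite.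
For `A = Ein_k` we have `tr Ein_k = (n - k) S`, so `t₁(Ein_k) = (n - 1 - k) • Ein_{-k/(n-1-k)}`
with `n - 1 - k > 0`.
-/

open RealInnerProductSpace

section FirstNewtonTransform

variable {E : Type*} [NormedAddCommGroup E] [InnerProductSpace ℝ E]

noncomputable def firstNewtonTransform (A : E →ₗ[ℝ] E) : E →ₗ[ℝ] E :=
  LinearMap.trace ℝ E A • LinearMap.id - A

lemma inner_firstNewtonTransform_apply_self (A : E →ₗ[ℝ] E) (v : E) :
    ⟪firstNewtonTransform A v, v⟫ = LinearMap.trace ℝ E A * ‖v‖ ^ 2 - ⟪A v, v⟫ := by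
  simp only [firstNewtonTransform, LinearMap.sub_apply, LinearMap.smul_apply, LinearMap.id_apply,
    inner_sub_left, real_inner_smul_left, real_inner_self_eq_norm_sq]

lemma sum_inner_pos_of_orthonormal {A : E →ₗ[ℝ] E} (hA : ∀ v : E, v ≠ 0 → 0 < ⟪A v, v⟫)
    {ι : Type*} [Fintype ι] [Nonempty ι] {v : ι → E} (hv : Orthonormal ℝ v) :
    0 < ∑ i, ⟪A (v i), v i⟫ :=
  Finset.sum_pos (fun i _ => hA (v i) (hv.ne_zero i)) Finset.univ_nonempty

variable [FiniteDimensional ℝ E]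

lemma exists_orthonormalBasis_last_eq {m : ℕ} (hm : Module.finrank ℝ E = m + 1) {u : E}
    (hu : ‖u‖ = 1) : ∃ b : OrthonormalBasis (Fin (m + 1)) ℝ E, b (Fin.last m) = u := by
  have hu' : Orthonormal ℝ (({Fin.last m} : Set (Fin (m + 1))).domRestrict fun _ => u) :=
    ⟨fun _ => hu, fun i j hij => absurd (Subsingleton.elim i j) hij⟩
  obtain ⟨b, hb⟩ := hu'.exists_orthonormalBasis_extension_of_card_eq (by simpa using hm)
  exact ⟨b, hb _ rfl⟩

lemma inner_firstNewtonTransform_pos_of_norm_eq_one {m : ℕ} (hm : Module.finrank ℝ E = m + 1)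
    {A : E →ₗ[ℝ] E} (hA : ∀ v : Fin m → E, Orthonormal ℝ v → 0 < ∑ i, ⟪A (v i), v i⟫)
    {u : E} (hu : ‖u‖ = 1) : 0 < ⟪firstNewtonTransform A u, u⟫ := by
  obtain ⟨b, hbu⟩ := exists_orthonormalBasis_last_eq hm hu
  have htrace : LinearMap.trace ℝ E A =
      ∑ i : Fin m, ⟪A (b i.castSucc), b i.castSucc⟫ + ⟪A u, u⟫ := by
    rw [LinearMap.trace_eq_sum_inner A b, Fin.sum_univ_castSucc, hbu]
    simp only [real_inner_comm (A _)]
  have hframe := hA _ (b.orthonormal.comp _ (Fin.castSucc_injective m))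
  simp only [Function.comp_apply] at hframe
  rw [inner_firstNewtonTransform_apply_self, hu]
  linarith

lemma inner_firstNewtonTransform_pos {m : ℕ} (hm : Module.finrank ℝ E = m + 1)
    {A : E →ₗ[ℝ] E} (hA : ∀ v : Fin m → E, Orthonormal ℝ v → 0 < ∑ i, ⟪A (v i), v i⟫)
    {v : E} (hv : v ≠ 0) : 0 < ⟪firstNewtonTransform A v, v⟫ := by
  have hu := inner_firstNewtonTransform_pos_of_norm_eq_one hm hA (norm_smul_inv_norm (𝕜 := ℝ) hv)
  have hv' : 0 < ‖v‖ := norm_pos_iff.mpr hv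
  rw [← smul_inv_smul₀ hv'.ne' v, map_smul, real_inner_smul_left, real_inner_smul_right]
  positivity

lemma firstNewtonTransform_trace_smul_id_sub_smul {n : ℕ} (hn : Module.finrank ℝ E = n)
    (ρ : E →ₗ[ℝ] E) {k : ℝ} (hk : (n : ℝ) - 1 - k ≠ 0) :
    firstNewtonTransform (LinearMap.trace ℝ E ρ • LinearMap.id - k • ρ) =
      ((n : ℝ) - 1 - k) •
        (LinearMap.trace ℝ E ρ • LinearMap.id - (-k / ((n : ℝ) - 1 - k)) • ρ) := by
  rw [firstNewtonTransform, map_sub, map_smul, map_smul, LinearMap.trace_id, hn, smul_sub,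
    smul_smul, smul_smul, mul_div_cancel₀ _ hk]
  module

end FirstNewtonTransform

theorem stmt_6_general {E : Type*} [NormedAddCommGroup E] [InnerProductSpace ℝ E]
    [FiniteDimensional ℝ E] {n : ℕ} (hn : Module.finrank ℝ E = n)
    (ρ : E →ₗ[ℝ] E) (S : ℝ) (hS : S = LinearMap.trace ℝ E ρ)
    {k : ℝ} (hk : 0 < k) (hkn : k < (n : ℝ) - 1)
    (hpos : ∀ v : E, v ≠ 0 →
      0 < ⟪(S • (LinearMap.id : E →ₗ[ℝ] E) - k • ρ) v, v⟫) :
    (∀ v : Fin (n - 1) → E, Orthonormal ℝ v →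
      0 < ∑ i, ⟪(S • (LinearMap.id : E →ₗ[ℝ] E) - k • ρ) (v i), v i⟫) ∧
    (∀ v : E, v ≠ 0 →
      0 < ⟪(S • (LinearMap.id : E →ₗ[ℝ] E) - (-k / ((n : ℝ) - 1 - k)) • ρ) v, v⟫) := by
  have hn2 : 2 ≤ n := by
    have : (1 : ℝ) < n := by linarith
    exact_mod_cast this
  have : Nonempty (Fin (n - 1)) := ⟨⟨0, by omega⟩⟩
  have hframes : ∀ v : Fin (n - 1) → E, Orthonormal ℝ v →
      0 < ∑ i, ⟪(S • (LinearMap.id : E →ₗ[ℝ] E) - k • ρ) (v i), v i⟫ :=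
    fun v hv => sum_inner_pos_of_orthonormal hpos hv
  refine ⟨hframes, fun v hv => ?_⟩
  have hc : (0 : ℝ) < (n : ℝ) - 1 - k := by linarith
  have hnewton := inner_firstNewtonTransform_pos (by omega) hframes hv
  rw [hS, firstNewtonTransform_trace_smul_id_sub_smul hn ρ hc.ne', LinearMap.smul_apply,
    real_inner_smul_left] at hnewton
  rw [hS]
  exact pos_of_mul_pos_right hnewton hc.le

/-- If `Ein_k = S•id - k•ρ` is positive definite for some `0 < k < n-1`,
then `Ein_k` is `(n-1)`-positive (the sum over any orthonormal `(n-1)`-frame of its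
quadratic form is positive, equivalently the sum of its lowest `n-1` eigenvalues is
positive), and hence `Ein_{-k/(n-1-k)}` is positive definite. -/
theorem stmt_6 {E : Type*} [NormedAddCommGroup E] [InnerProductSpace ℝ E]
    [FiniteDimensional ℝ E] {n : ℕ} (hn : Module.finrank ℝ E = n)
    (ρ : E →ₗ[ℝ] E) (hρ : ρ.IsSymmetric) (S : ℝ) (hS : S = LinearMap.trace ℝ E ρ)
    {k : ℝ} (hk : 0 < k) (hkn : k < (n : ℝ) - 1)
    (hpos : ∀ v : E, v ≠ 0 →
      0 < ⟪(S • (LinearMap.id : E →ₗ[ℝ] E) - k • ρ) v, v⟫) :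
    (∀ v : Fin (n - 1) → E, Orthonormal ℝ v →
      0 < ∑ i, ⟪(S • (LinearMap.id : E →ₗ[ℝ] E) - k • ρ) (v i), v i⟫) ∧
    (∀ v : E, v ≠ 0 →
      0 < ⟪(S • (LinearMap.id : E →ₗ[ℝ] E) - (-k / ((n : ℝ) - 1 - k)) • ρ) v, v⟫) :=
  stmt_6_general hn ρ S hS hk hkn hpos
end

section
/- Let ρ be a symmetric operator on an n-dimensional real inner product space with trace S and n ≥ 3. If n−2 ≤ k < n and Ein_k = S·id − k·ρ is positive definite, then Ein_{−k} = S·id + k·ρ is positive definite. -/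
/-!
Put `A = Ein_k = S • id - k • ρ`, so that `tr A = (n - k) S`. Computing the trace of the positive
definite `A` in an orthonormal basis containing a unit vector `u`, whose other diagonal entries are
positive, gives `⟪A u, u⟫ < tr A` as soon as `n ≥ 2`; in particular `S > 0`. Since `Ein_{-k} = 2S • id - A` and `n - k ≤ 2`,
`⟪Ein_{-k} u, u⟫ > (2 - (n - k)) S ≥ 0`.
-/

open RealInnerProductSpace Module

section

variable {E : Type*} [NormedAddCommGroup E] [InnerProductSpace ℝ E] [FiniteDimensional ℝ E]

theorem OrthonormalBasis.exists_apply_eq_of_norm_eq_one {ι : Type*} [Fintype ι]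
    (hι : finrank ℝ E = Fintype.card ι) {u : E} (hu : ‖u‖ = 1) (i : ι) :
    ∃ b : OrthonormalBasis ι ℝ E, b i = u := by
  have hsingle : Orthonormal ℝ (({i} : Set ι).domRestrict fun _ => u) :=
    orthonormal_subsingleton_iff.2 fun _ => hu
  obtain ⟨b, hb⟩ := hsingle.exists_orthonormalBasis_extension_of_card_eq hι
  exact ⟨b, hb i rfl⟩

namespace LinearMap

theorem inner_map_self_lt_trace_of_norm_eq_one {A : E →ₗ[ℝ] E}
    (hA : ∀ v, v ≠ 0 → 0 < ⟪A v, v⟫) (hE : 1 < finrank ℝ E) {u : E} (hu : ‖u‖ = 1) :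
    ⟪A u, u⟫ < trace ℝ E A := by
  let i : Fin (finrank ℝ E) := ⟨0, by omega⟩
  obtain ⟨b, rfl⟩ := OrthonormalBasis.exists_apply_eq_of_norm_eq_one (by simp) hu i
  obtain ⟨j, hji⟩ := Fintype.exists_ne_of_one_lt_card (by simpa using hE) i
  have hdiag_pos : ∀ j, 0 < ⟪b j, A (b j)⟫ := fun j =>
    real_inner_comm (b j) _ ▸ hA _ (b.orthonormal.ne_zero j)
  rw [trace_eq_sum_inner A b, real_inner_comm]
  exact Finset.single_lt_sum hji (Finset.mem_univ i) (Finset.mem_univ j) (hdiag_pos j)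
    fun l _ _ => (hdiag_pos l).le

theorem inner_map_self_lt_trace_mul_norm_sq {A : E →ₗ[ℝ] E}
    (hA : ∀ v, v ≠ 0 → 0 < ⟪A v, v⟫) (hE : 1 < finrank ℝ E) {v : E} (hv : v ≠ 0) :
    ⟪A v, v⟫ < trace ℝ E A * ‖v‖ ^ 2 := by
  have hunit := inner_map_self_lt_trace_of_norm_eq_one hA hE (norm_smul_inv_norm (𝕜 := ℝ) hv)
  simp only [map_smul, real_inner_smul_left, real_inner_smul_right] at hunit
  field_simp at hunit
  simpa [mul_comm] using hunit

end LinearMap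

end

theorem stmt_7_general {E : Type*} [NormedAddCommGroup E] [InnerProductSpace ℝ E]
    [FiniteDimensional ℝ E] {n : ℕ} (hn : Module.finrank ℝ E = n) (hn3 : 3 ≤ n)
    (ρ : E →ₗ[ℝ] E) (S : ℝ) (hS : S = LinearMap.trace ℝ E ρ)
    {k : ℝ} (hk1 : (n : ℝ) - 2 ≤ k) (hk2 : k < n)
    (hpos : ∀ v : E, v ≠ 0 →
      0 < ⟪(S • (LinearMap.id : E →ₗ[ℝ] E) - k • ρ) v, v⟫) :
    ∀ v : E, v ≠ 0 →
      0 < ⟪(S • (LinearMap.id : E →ₗ[ℝ] E) + k • ρ) v, v⟫ := by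
  intro v hv
  set A := S • (LinearMap.id : E →ₗ[ℝ] E) - k • ρ
  have htrace : LinearMap.trace ℝ E A = (n - k) * S := by
    simp only [A, map_sub, map_smul, LinearMap.trace_id, hn, smul_eq_mul, ← hS]
    ring
  have hlt := LinearMap.inner_map_self_lt_trace_mul_norm_sq hpos (by omega) hv
  rw [htrace] at hlt
  have hv2 : 0 < ‖v‖ ^ 2 := by positivity
  have hS_pos : 0 < S := by
    have hnk : 0 < (n - k) * S := pos_of_mul_pos_left ((hpos v hv).trans hlt) hv2.le
    exact pos_of_mul_pos_right hnk (by linarith)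
  have hEin : ⟪(S • (LinearMap.id : E →ₗ[ℝ] E) + k • ρ) v, v⟫ = 2 * S * ‖v‖ ^ 2 - ⟪A v, v⟫ := by
    simp only [A, LinearMap.add_apply, LinearMap.sub_apply, LinearMap.smul_apply,
      LinearMap.id_coe, id_eq, inner_add_left, inner_sub_left, real_inner_smul_left,
      real_inner_self_eq_norm_sq]
    ring
  calc (0 : ℝ) ≤ (k - n + 2) * (S * ‖v‖ ^ 2) := by
        have : (0 : ℝ) ≤ k - n + 2 := by linarith
        positivity
    _ = 2 * S * ‖v‖ ^ 2 - (n - k) * S * ‖v‖ ^ 2 := by ring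
    _ < _ := by rw [hEin]; linarith

/-- For `n ≥ 3` and `n-2 ≤ k < n`, if `Ein_k = S•id - k•ρ` is positive
definite, then `Ein_{-k} = S•id + k•ρ` is positive definite. -/
theorem stmt_7 {E : Type*} [NormedAddCommGroup E] [InnerProductSpace ℝ E]
    [FiniteDimensional ℝ E] {n : ℕ} (hn : Module.finrank ℝ E = n) (hn3 : 3 ≤ n)
    (ρ : E →ₗ[ℝ] E) (hρ : ρ.IsSymmetric) (S : ℝ) (hS : S = LinearMap.trace ℝ E ρ)
    {k : ℝ} (hk1 : (n : ℝ) - 2 ≤ k) (hk2 : k < n)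
    (hpos : ∀ v : E, v ≠ 0 →
      0 < ⟪(S • (LinearMap.id : E →ₗ[ℝ] E) - k • ρ) v, v⟫) :
    ∀ v : E, v ≠ 0 →
      0 < ⟪(S • (LinearMap.id : E →ₗ[ℝ] E) + k • ρ) v, v⟫ :=
  stmt_7_general hn hn3 ρ S hS hk1 hk2 hpos
end

section
/- Let ρ be a symmetric operator on an n-dimensional real inner product space (n ≥ 2) with trace S. If σ₁(B) > 0 and σ₂(B) > 0 for B = S·id − (n−1)·ρ, then Ein_{n/2} = S·id − (n/2)·ρ is positive definite. -/
/-!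
Writing `B = S • id - (n - 1) • ρ`, the reflection `B̄ = (2 S / n) • id - B` has the same trace
and the same trace of its square as `B`, hence the same `σ₁` and `σ₂`, and
`S • id - B̄ = (2 (n - 1) / n) • (S • id - (n / 2) • ρ)`. So it suffices that `σ₁(A), σ₂(A) > 0`
forces `σ₁(A) • id - A > 0` for symmetric `A`: by Cauchy–Schwarz,
`⟪A v, v⟫² ≤ ‖A v‖² ‖v‖² ≤ tr (A ∘ A) ‖v‖⁴ < σ₁(A)² ‖v‖⁴`, where the middle inequality
compares `‖A u‖²` with the sum of the `‖A bᵢ‖²` over an orthonormal basis containing `u = v / ‖v‖`.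
-/

open RealInnerProductSpace

namespace LinearMap

open Module

section TraceReflection

variable {K V : Type*} [Field K] [AddCommGroup V] [Module K V]

/-- The paper's `B̄`: the reflection of `A` through `(σ₁(A) / n) • id`. -/
noncomputable def traceReflection (A : V →ₗ[K] V) : V →ₗ[K] V :=
  (2 * trace K V A / finrank K V) • id - A

variable [FiniteDimensional K V] {A : V →ₗ[K] V} (hd : (finrank K V : K) ≠ 0)
include hd

theorem trace_traceReflection : trace K V (traceReflection A) = trace K V A := by
  simp only [traceReflection, map_sub, map_smul, trace_id, smul_eq_mul]
  field_simp
  ring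

theorem trace_traceReflection_comp_self :
    trace K V (traceReflection A ∘ₗ traceReflection A) = trace K V (A ∘ₗ A) := by
  simp only [traceReflection, sub_comp, comp_sub, smul_comp, comp_smul, id_comp, comp_id,
    map_sub, map_smul, trace_id, smul_eq_mul]
  field_simp
  ring

end TraceReflection

section InnerProductSpace

variable {E : Type*} [NormedAddCommGroup E] [InnerProductSpace ℝ E] {A : E →ₗ[ℝ] E}

theorem IsSymmetric.traceReflection (hA : A.IsSymmetric) :
    (traceReflection A).IsSymmetric :=
  (IsSymmetric.id.smul (by simp)).sub hA

variable [FiniteDimensional ℝ E]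

theorem IsSymmetric.norm_apply_sq_le_trace_comp_self_mul (hA : A.IsSymmetric) (v : E) :
    ‖A v‖ ^ 2 ≤ trace ℝ E (A ∘ₗ A) * ‖v‖ ^ 2 := by
  rcases eq_or_ne v 0 with rfl | hv
  · simp
  have hv' : 0 < ‖v‖ := norm_pos_iff.mpr hv
  set u := ‖v‖⁻¹ • v
  have hu : Orthonormal ℝ ((↑) : ({u} : Set E) → E) := orthonormal_subsingleton_iff.mpr
    (by simp [u, norm_smul, inv_mul_cancel₀ hv'.ne'])
  obtain ⟨s, b, hsub, hb⟩ := hu.exists_orthonormalBasis_extension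
  have hterm (x : E) : ⟪x, (A ∘ₗ A) x⟫ = ‖A x‖ ^ 2 := by
    rw [comp_apply, ← hA, real_inner_self_eq_norm_sq]
  have hmem : u ∈ s := hsub rfl
  have hAu : ‖A u‖ ^ 2 ≤ trace ℝ E (A ∘ₗ A) := by
    rw [trace_eq_sum_inner _ b, ← hterm, ← show b ⟨u, hmem⟩ = u by rw [hb]]
    exact Finset.single_le_sum (f := fun i ↦ ⟪b i, (A ∘ₗ A) (b i)⟫)
      (fun i _ ↦ by simp only [hterm]; positivity) (Finset.mem_univ _)
  rw [map_smul, norm_smul, norm_inv, norm_norm, mul_pow, inv_pow] at hAu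
  rwa [inv_mul_le_iff₀ (by positivity), mul_comm] at hAu

theorem IsSymmetric.inner_trace_smul_id_sub_apply_pos (hA : A.IsSymmetric)
    (htr : 0 < trace ℝ E A) (htr_sq : trace ℝ E (A ∘ₗ A) < trace ℝ E A ^ 2) {v : E}
    (hv : v ≠ 0) : 0 < ⟪(trace ℝ E A • (id : E →ₗ[ℝ] E) - A) v, v⟫ := by
  have hv' : 0 < ‖v‖ := norm_pos_iff.mpr hv
  have hAv : ‖A v‖ < trace ℝ E A * ‖v‖ := by
    refine lt_of_pow_lt_pow_left₀ 2 (by positivity) ?_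
    calc ‖A v‖ ^ 2 ≤ trace ℝ E (A ∘ₗ A) * ‖v‖ ^ 2 := hA.norm_apply_sq_le_trace_comp_self_mul v
      _ < (trace ℝ E A * ‖v‖) ^ 2 := by rw [mul_pow]; gcongr
  rw [sub_apply, inner_sub_left, smul_apply, id_apply, real_inner_smul_left,
    real_inner_self_eq_norm_sq, sub_pos]
  calc ⟪A v, v⟫ ≤ ‖A v‖ * ‖v‖ := real_inner_le_norm _ _
    _ < trace ℝ E A * ‖v‖ ^ 2 := by rw [sq, ← mul_assoc]; gcongr

end InnerProductSpace

end LinearMap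

/-- If `σ₁(B) > 0` and `σ₂(B) > 0` for `B = S•id - (n-1)•ρ` (`n ≥ 2`),
then `Ein_{n/2} = S•id - (n/2)•ρ` is positive definite. -/
theorem stmt_10 {E : Type*} [NormedAddCommGroup E] [InnerProductSpace ℝ E]
    [FiniteDimensional ℝ E] {n : ℕ} (hn : Module.finrank ℝ E = n) (hn2 : 2 ≤ n)
    (ρ : E →ₗ[ℝ] E) (hρ : ρ.IsSymmetric) (S : ℝ) (hS : S = LinearMap.trace ℝ E ρ)
    (B : E →ₗ[ℝ] E) (hB : B = S • (LinearMap.id : E →ₗ[ℝ] E) - ((n : ℝ) - 1) • ρ)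
    (hσ1 : 0 < LinearMap.trace ℝ E B)
    (hσ2 : 0 < ((LinearMap.trace ℝ E B) ^ 2 - LinearMap.trace ℝ E (B ∘ₗ B)) / 2) :
    ∀ v : E, v ≠ 0 →
      0 < ⟪(S • (LinearMap.id : E →ₗ[ℝ] E) - ((n : ℝ) / 2) • ρ) v, v⟫ := by
  intro v hv
  have hn2' : (2 : ℝ) ≤ n := by exact_mod_cast hn2
  have hd : (Module.finrank ℝ E : ℝ) ≠ 0 := by rw [hn]; positivity
  have hBsym : B.IsSymmetric :=
    hB ▸ (LinearMap.IsSymmetric.id.smul (by simp)).sub (hρ.smul (by simp))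
  have htrB : LinearMap.trace ℝ E B = S := by
    rw [hB, map_sub, map_smul, map_smul, LinearMap.trace_id, hn, ← hS, smul_eq_mul, smul_eq_mul]
    ring
  have hσ1' : 0 < LinearMap.trace ℝ E B.traceReflection := by
    rwa [LinearMap.trace_traceReflection hd]
  have hσ2' : LinearMap.trace ℝ E (B.traceReflection ∘ₗ B.traceReflection)
      < LinearMap.trace ℝ E B.traceReflection ^ 2 := by
    rw [LinearMap.trace_traceReflection hd, LinearMap.trace_traceReflection_comp_self hd]
    linarith
  have hpos := hBsym.traceReflection.inner_trace_smul_id_sub_apply_pos hσ1' hσ2' hv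
  have hEin : LinearMap.trace ℝ E B.traceReflection • LinearMap.id - B.traceReflection
      = (2 * ((n : ℝ) - 1) / n) • (S • (LinearMap.id : E →ₗ[ℝ] E) - ((n : ℝ) / 2) • ρ) := by
    rw [LinearMap.trace_traceReflection hd, LinearMap.traceReflection, htrB, hn, hB]
    match_scalars
    · field_simp
      ring
    · field_simp
  rw [hEin, LinearMap.smul_apply, real_inner_smul_left] at hpos
  exact pos_of_mul_pos_right hpos (div_nonneg (by linarith) (by linarith))
end

section
/- Let ρ be a symmetric operator on an n-dimensional real inner product space (n ≥ 4) with trace S, A = (1/(n−2))·(ρ − (S/(2(n−1)))·id) the Schouten operator, and k = 2n(n−1)/(3n−4). Define Ā = ((3n−4)/(2n(n−1)(n−2)))·(S·id − k·ρ). Then σ₁(Ā) = σ₁(A) and σ₂(Ā) = σ₂(A); in particular σ₁(A) > 0 and σ₂(A) > 0 if and only if σ₁(Ein_k) > 0 and σ₂(Ein_k) > 0. -/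
/-!
Both `A` and `Ā` are of the form `a • ρ + b • id`, and for such an operator `σ₁` and `σ₂` are
polynomials in `a`, `b`, `tr ρ`, `tr ρ²` and `n`; comparing them is a rational-function identity
in `n`. Since `Ā` is a positive multiple of `Ein_k` and `σᵢ(c • T) = cⁱ σᵢ(T)`, positivity of
`σ₁, σ₂` transfers from `Ā` (equivalently `A`) to `Ein_k`.
-/

open LinearMap Module

namespace LinearMap

section Field

variable {K V : Type*} [Field K] [AddCommGroup V] [Module K V]

noncomputable def sigmaTwo (T : V →ₗ[K] V) : K :=
  ((trace K V T) ^ 2 - trace K V (T ∘ₗ T)) / 2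

theorem sigmaTwo_smul (c : K) (T : V →ₗ[K] V) : sigmaTwo (c • T) = c ^ 2 * sigmaTwo T := by
  simp only [sigmaTwo, smul_comp, comp_smul, map_smul, smul_smul, smul_eq_mul]
  ring

theorem trace_smul_add_smul_id [FiniteDimensional K V] (a b : K) (T : V →ₗ[K] V) :
    trace K V (a • T + b • id) = a * trace K V T + b * finrank K V := by
  simp only [map_add, map_smul, trace_id, smul_eq_mul]

theorem sigmaTwo_smul_add_smul_id [FiniteDimensional K V] (a b : K) (T : V →ₗ[K] V) :
    sigmaTwo (a • T + b • id) =
      ((a * trace K V T + b * finrank K V) ^ 2 -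
        (a ^ 2 * trace K V (T ∘ₗ T) + 2 * a * b * trace K V T + b ^ 2 * finrank K V)) / 2 := by
  simp only [sigmaTwo, add_comp, comp_add, smul_comp, comp_smul,
    id_comp, comp_id, map_add, map_smul, trace_id, smul_eq_mul]
  ring

end Field

theorem trace_pos_and_sigmaTwo_pos_smul_iff {K V : Type*} [Field K] [LinearOrder K]
    [IsStrictOrderedRing K] [AddCommGroup V] [Module K V] {c : K} (hc : 0 < c) (T : V →ₗ[K] V) :
    (0 < trace K V (c • T) ∧ 0 < sigmaTwo (c • T)) ↔ (0 < trace K V T ∧ 0 < sigmaTwo T) := by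
  rw [map_smul, smul_eq_mul, sigmaTwo_smul, mul_pos_iff_of_pos_left hc,
    mul_pos_iff_of_pos_left (pow_pos hc 2)]

end LinearMap

theorem stmt_11_general {E : Type*} [NormedAddCommGroup E] [InnerProductSpace ℝ E]
    [FiniteDimensional ℝ E] {n : ℕ} (hn : Module.finrank ℝ E = n) (hn4 : 4 ≤ n)
    (ρ : E →ₗ[ℝ] E) (S : ℝ) (hS : S = LinearMap.trace ℝ E ρ)
    (k : ℝ) (hk : k = 2 * n * ((n : ℝ) - 1) / (3 * n - 4))
    (A Abar Eink : E →ₗ[ℝ] E)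
    (hA : A = (((n : ℝ) - 2)⁻¹) •
      (ρ - (S / (2 * ((n : ℝ) - 1))) • (LinearMap.id : E →ₗ[ℝ] E)))
    (hEink : Eink = S • (LinearMap.id : E →ₗ[ℝ] E) - k • ρ)
    (hAbar : Abar = ((3 * (n : ℝ) - 4) / (2 * n * ((n : ℝ) - 1) * ((n : ℝ) - 2))) • Eink) :
    (LinearMap.trace ℝ E Abar = LinearMap.trace ℝ E A ∧
      ((LinearMap.trace ℝ E Abar) ^ 2 - LinearMap.trace ℝ E (Abar ∘ₗ Abar)) / 2 =
        ((LinearMap.trace ℝ E A) ^ 2 - LinearMap.trace ℝ E (A ∘ₗ A)) / 2) ∧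
    ((0 < LinearMap.trace ℝ E A ∧
        0 < ((LinearMap.trace ℝ E A) ^ 2 - LinearMap.trace ℝ E (A ∘ₗ A)) / 2) ↔
      (0 < LinearMap.trace ℝ E Eink ∧
        0 < ((LinearMap.trace ℝ E Eink) ^ 2 - LinearMap.trace ℝ E (Eink ∘ₗ Eink)) / 2)) := by
  have hn4' : (4 : ℝ) ≤ n := by exact_mod_cast hn4
  set c := (3 * (n : ℝ) - 4) / (2 * n * ((n : ℝ) - 1) * ((n : ℝ) - 2)) with hc_def
  have hc : 0 < c := div_pos (by linarith) (by apply mul_pos <;> nlinarith)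
  have hA' : A = ((n : ℝ) - 2)⁻¹ • ρ +
      (-((n : ℝ) - 2)⁻¹ * (S / (2 * ((n : ℝ) - 1)))) • LinearMap.id := by
    rw [hA]; module
  have hAbar' : Abar = (c * -k) • ρ + (c * S) • LinearMap.id := by
    rw [hAbar, hEink]; module
  have h3n4 : 3 * (n : ℝ) - 4 ≠ 0 := by linarith
  have hn1 : (n : ℝ) - 1 ≠ 0 := by linarith
  have hn2 : (n : ℝ) - 2 ≠ 0 := by linarith
  have htrace : trace ℝ E Abar = trace ℝ E A := by
    rw [hA', hAbar', trace_smul_add_smul_id, trace_smul_add_smul_id, hn, hk, ← hS, hc_def]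
    field_simp
    ring
  have hsigmaTwo : sigmaTwo Abar = sigmaTwo A := by
    rw [hA', hAbar', sigmaTwo_smul_add_smul_id, sigmaTwo_smul_add_smul_id, hn, hk, ← hS, hc_def]
    field_simp
    ring
  refine ⟨⟨htrace, hsigmaTwo⟩, ?_⟩
  change (0 < trace ℝ E A ∧ 0 < sigmaTwo A) ↔ (0 < trace ℝ E Eink ∧ 0 < sigmaTwo Eink)
  rw [← htrace, ← hsigmaTwo, hAbar]
  exact trace_pos_and_sigmaTwo_pos_smul_iff hc Eink

/-- For `n ≥ 4`, `A` the Schouten operator, `k = 2n(n-1)/(3n-4)` and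
`Ā = ((3n-4)/(2n(n-1)(n-2)))•(S•id - k•ρ)`, one has `σ₁(Ā) = σ₁(A)` and
`σ₂(Ā) = σ₂(A)`; in particular `σ₁(A), σ₂(A) > 0` iff `σ₁(Ein_k), σ₂(Ein_k) > 0`. -/
theorem stmt_11 {E : Type*} [NormedAddCommGroup E] [InnerProductSpace ℝ E]
    [FiniteDimensional ℝ E] {n : ℕ} (hn : Module.finrank ℝ E = n) (hn4 : 4 ≤ n)
    (ρ : E →ₗ[ℝ] E) (hρ : ρ.IsSymmetric) (S : ℝ) (hS : S = LinearMap.trace ℝ E ρ)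
    (k : ℝ) (hk : k = 2 * n * ((n : ℝ) - 1) / (3 * n - 4))
    (A Abar Eink : E →ₗ[ℝ] E)
    (hA : A = (((n : ℝ) - 2)⁻¹) •
      (ρ - (S / (2 * ((n : ℝ) - 1))) • (LinearMap.id : E →ₗ[ℝ] E)))
    (hEink : Eink = S • (LinearMap.id : E →ₗ[ℝ] E) - k • ρ)
    (hAbar : Abar = ((3 * (n : ℝ) - 4) / (2 * n * ((n : ℝ) - 1) * ((n : ℝ) - 2))) • Eink) :
    (LinearMap.trace ℝ E Abar = LinearMap.trace ℝ E A ∧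
      ((LinearMap.trace ℝ E Abar) ^ 2 - LinearMap.trace ℝ E (Abar ∘ₗ Abar)) / 2 =
        ((LinearMap.trace ℝ E A) ^ 2 - LinearMap.trace ℝ E (A ∘ₗ A)) / 2) ∧
    ((0 < LinearMap.trace ℝ E A ∧
        0 < ((LinearMap.trace ℝ E A) ^ 2 - LinearMap.trace ℝ E (A ∘ₗ A)) / 2) ↔
      (0 < LinearMap.trace ℝ E Eink ∧
        0 < ((LinearMap.trace ℝ E Eink) ^ 2 - LinearMap.trace ℝ E (Eink ∘ₗ Eink)) / 2)) :=
  stmt_11_general hn hn4 ρ S hS k hk A Abar Eink hA hEink hAbar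
end

section
/- Let ρ be a symmetric operator on an n-dimensional real inner product space (n ≥ 3) with trace S, and k = 2(n−1)²/(2n−3). Then the first Newton transformation of Ein_k = S·id − k·ρ satisfies t₁(Ein_k) = k(n−2)·A, where A = (1/(n−2))·(ρ − (S/(2(n−1)))·id) is the Schouten operator. Consequently, if Ein_k is positive definite then A is positive definite. -/
/-!
With `k = 2(n-1)²/(2n-3)` one has `n - 1 - k = -k/(2(n-1))`, so the first Newton transformation
`t₁(Ein_k) = (n-1-k) S • id + k • ρ` is `k • (ρ - S/(2(n-1)) • id) = k(n-2) • A`. Positivity passes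
from `Ein_k` to `t₁(Ein_k)`: for a unit vector `u`, extend it to an orthonormal basis; then
`tr T - ⟪T u, u⟫` is the sum of the diagonal entries of `T` along the remaining `n - 1 ≥ 1` basis
vectors, each of them positive.
-/

open RealInnerProductSpace

theorem sub_one_sub_eq_neg_div_of_mul_eq {K : Type*} [Field K] [CharZero K] {n k : K}
    (hn : n - 1 ≠ 0) (hk : k * (2 * n - 3) = 2 * (n - 1) ^ 2) :
    n - 1 - k = -(k / (2 * (n - 1))) := by
  field_simp
  linear_combination -hk

namespace LinearMap

section CommRing

variable {R M : Type*} [CommRing R] [AddCommGroup M] [Module R M]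

noncomputable def firstNewtonTransform (T : M →ₗ[R] M) : M →ₗ[R] M :=
  trace R M T • id - T

variable [Module.Free R M] [Module.Finite R M]

theorem firstNewtonTransform_trace_smul_id_sub_smul (ρ : M →ₗ[R] M) (k : R) :
    firstNewtonTransform (trace R M ρ • id - k • ρ) =
      ((Module.finrank R M - 1 - k) * trace R M ρ) • id + k • ρ := by
  simp only [firstNewtonTransform, map_sub, map_smul, trace_id, smul_eq_mul]
  ext v
  simp only [sub_apply, add_apply, smul_apply, id_apply]
  module

end CommRing

section InnerProductSpace

variable {E : Type*} [NormedAddCommGroup E] [InnerProductSpace ℝ E] [FiniteDimensional ℝ E]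

theorem inner_lt_trace_of_norm_eq_one {T : E →ₗ[ℝ] E} (hT : ∀ v, v ≠ 0 → 0 < ⟪T v, v⟫)
    (hE : 2 ≤ Module.finrank ℝ E) {u : E} (hu : ‖u‖ = 1) : ⟪T u, u⟫ < trace ℝ E T := by
  set n := Module.finrank ℝ E
  have : NeZero n := ⟨by omega⟩
  have hu' : Orthonormal ℝ (({0} : Set (Fin n)).domRestrict fun _ ↦ u) :=
    orthonormal_subsingleton_iff.mpr fun _ ↦ hu
  obtain ⟨b, hb⟩ := hu'.exists_orthonormalBasis_extension_of_card_eq (by simp [n])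
  have hb0 : b 0 = u := hb 0 rfl
  have hdiag : ∀ i, 0 < ⟪b i, T (b i)⟫ := fun i ↦ by
    rw [real_inner_comm]
    exact hT _ (b.orthonormal.ne_zero i)
  have hne : (⟨1, by omega⟩ : Fin n) ∈ Finset.univ.erase 0 :=
    Finset.mem_erase.mpr ⟨Fin.ne_of_val_ne one_ne_zero, Finset.mem_univ _⟩
  rw [trace_eq_sum_inner T b, ← Finset.add_sum_erase _ _ (Finset.mem_univ 0), hb0,
    real_inner_comm, lt_add_iff_pos_right]
  exact Finset.sum_pos (fun i _ ↦ hdiag i) ⟨_, hne⟩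

theorem inner_firstNewtonTransform_pos {T : E →ₗ[ℝ] E} (hT : ∀ v, v ≠ 0 → 0 < ⟪T v, v⟫)
    (hE : 2 ≤ Module.finrank ℝ E) {v : E} (hv : v ≠ 0) :
    0 < ⟪firstNewtonTransform T v, v⟫ := by
  have hv' : ‖v‖ ≠ 0 := norm_ne_zero_iff.mpr hv
  set u := ‖v‖⁻¹ • v
  have hu : ‖u‖ = 1 := by rw [norm_smul, norm_inv, norm_norm, inv_mul_cancel₀ hv']
  have hTv : ⟪T v, v⟫ = ‖v‖ ^ 2 * ⟪T u, u⟫ := by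
    simp only [u, map_smul, real_inner_smul_left, real_inner_smul_right]
    field_simp
  have key : ⟪firstNewtonTransform T v, v⟫ = ‖v‖ ^ 2 * (trace ℝ E T - ⟪T u, u⟫) := by
    simp only [firstNewtonTransform, sub_apply, smul_apply, id_apply, inner_sub_left,
      real_inner_smul_left, real_inner_self_eq_norm_sq, hTv]
    ring
  rw [key]
  exact mul_pos (by positivity) (sub_pos.mpr (inner_lt_trace_of_norm_eq_one hT hE hu))

end InnerProductSpace

end LinearMap

theorem stmt_12_general {E : Type*} [NormedAddCommGroup E] [InnerProductSpace ℝ E]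
    [FiniteDimensional ℝ E] {n : ℕ} (hn : Module.finrank ℝ E = n) (hn3 : 3 ≤ n)
    (ρ : E →ₗ[ℝ] E) (S : ℝ) (hS : S = LinearMap.trace ℝ E ρ)
    (k : ℝ) (hk : k = 2 * ((n : ℝ) - 1) ^ 2 / (2 * n - 3))
    (A Eink : E →ₗ[ℝ] E)
    (hA : A = (((n : ℝ) - 2)⁻¹) •
      (ρ - (S / (2 * ((n : ℝ) - 1))) • (LinearMap.id : E →ₗ[ℝ] E)))
    (hEink : Eink = S • (LinearMap.id : E →ₗ[ℝ] E) - k • ρ) :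
    ((LinearMap.trace ℝ E Eink) • (LinearMap.id : E →ₗ[ℝ] E) - Eink =
      (k * ((n : ℝ) - 2)) • A) ∧
    ((∀ v : E, v ≠ 0 → 0 < ⟪Eink v, v⟫) → ∀ v : E, v ≠ 0 → 0 < ⟪A v, v⟫) := by
  have hn' : (3 : ℝ) ≤ n := by exact_mod_cast hn3
  have hk' : k * (2 * n - 3) = 2 * ((n : ℝ) - 1) ^ 2 := by
    rw [hk]; exact div_mul_cancel₀ _ (by linarith)
  have hk_pos : 0 < k * ((n : ℝ) - 2) := by
    rw [hk]; exact mul_pos (div_pos (by nlinarith) (by linarith)) (by linarith)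
  have hcoeff : ((n : ℝ) - 1 - k) * S = -(k * (S / (2 * ((n : ℝ) - 1)))) := by
    rw [sub_one_sub_eq_neg_div_of_mul_eq (by linarith) hk']
    ring
  have hnewton : LinearMap.firstNewtonTransform Eink = (k * ((n : ℝ) - 2)) • A := by
    rw [hEink, hS, LinearMap.firstNewtonTransform_trace_smul_id_sub_smul, hn, ← hS, hcoeff, hA,
      smul_smul, mul_inv_cancel_right₀ (by linarith)]
    module
  refine ⟨hnewton, fun hpos v hv ↦ ?_⟩
  have hAv : A = (k * ((n : ℝ) - 2))⁻¹ • LinearMap.firstNewtonTransform Eink := by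
    rw [hnewton, inv_smul_smul₀ hk_pos.ne']
  rw [hAv, LinearMap.smul_apply, real_inner_smul_left]
  exact mul_pos (inv_pos.mpr hk_pos)
    (LinearMap.inner_firstNewtonTransform_pos hpos (by omega) hv)

/-- For `n ≥ 3` and `k = 2(n-1)²/(2n-3)`, the first Newton
transformation of `Ein_k = S•id - k•ρ` equals `k(n-2)•A` where `A` is the Schouten
operator; consequently `Ein_k` positive definite implies `A` positive definite. -/
theorem stmt_12 {E : Type*} [NormedAddCommGroup E] [InnerProductSpace ℝ E]
    [FiniteDimensional ℝ E] {n : ℕ} (hn : Module.finrank ℝ E = n) (hn3 : 3 ≤ n)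
    (ρ : E →ₗ[ℝ] E) (hρ : ρ.IsSymmetric) (S : ℝ) (hS : S = LinearMap.trace ℝ E ρ)
    (k : ℝ) (hk : k = 2 * ((n : ℝ) - 1) ^ 2 / (2 * n - 3))
    (A Eink : E →ₗ[ℝ] E)
    (hA : A = (((n : ℝ) - 2)⁻¹) •
      (ρ - (S / (2 * ((n : ℝ) - 1))) • (LinearMap.id : E →ₗ[ℝ] E)))
    (hEink : Eink = S • (LinearMap.id : E →ₗ[ℝ] E) - k • ρ) :
    ((LinearMap.trace ℝ E Eink) • (LinearMap.id : E →ₗ[ℝ] E) - Eink =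
      (k * ((n : ℝ) - 2)) • A) ∧
    ((∀ v : E, v ≠ 0 → 0 < ⟪Eink v, v⟫) → ∀ v : E, v ≠ 0 → 0 < ⟪A v, v⟫) :=
  stmt_12_general hn hn3 ρ S hS k hk A Eink hA hEink
end

section
/- Let ρ be a symmetric operator on an n-dimensional real inner product space with trace S, and let n−1 ≤ k < n. If Ein_k = S·id − k·ρ is positive definite, then Sch_{1−(n−1)/k} := ρ − (1−(n−1)/k)·S·id is positive definite. -/
/-!
The first Newton transformation `t₁(A) = tr A • id - A` of a positive definite operator `A` is
again positive definite once `dim ≥ 2`: for a unit vector `w`, completing `w` to an orthonormal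
basis writes `tr A` as `⟪A w, w⟫` plus at least one further positive diagonal entry. Applied to
`Ein_k = S • id - k • ρ`, whose trace is `(n - k) S`, this gives
`t₁(Ein_k) = k • (ρ - (1 - (n - 1) / k) S • id)`, and `k > 0` since `k ≥ n - 1 ≥ 1`.
-/

open RealInnerProductSpace

namespace LinearMap

variable {E : Type*} [NormedAddCommGroup E] [InnerProductSpace ℝ E]

def IsPosDef (A : E →ₗ[ℝ] E) : Prop := ∀ v : E, v ≠ 0 → 0 < ⟪A v, v⟫

theorem IsPosDef.of_smul {A : E →ₗ[ℝ] E} {c : ℝ} (hc : 0 < c) (hA : (c • A).IsPosDef) :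
    A.IsPosDef := fun v hv => by
  have hcA := hA v hv
  rw [smul_apply, real_inner_smul_left] at hcA
  exact pos_of_mul_pos_right hcA hc.le

variable [FiniteDimensional ℝ E]

theorem IsPosDef.inner_lt_trace {A : E →ₗ[ℝ] E} (hA : A.IsPosDef)
    (hE : 2 ≤ Module.finrank ℝ E) {w : E} (hw : ‖w‖ = 1) :
    ⟪A w, w⟫ < trace ℝ E A := by
  set n := Module.finrank ℝ E
  let i₀ : Fin n := ⟨0, by omega⟩
  have hw_orthonormal : Orthonormal ℝ (({i₀} : Set (Fin n)).domRestrict fun _ => w) :=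
    orthonormal_subsingleton_iff.mpr fun _ => hw
  obtain ⟨b, hb⟩ := hw_orthonormal.exists_orthonormalBasis_extension_of_card_eq (by simp [n])
  obtain ⟨j, hj⟩ := Fintype.exists_ne_of_one_lt_card (by simp; omega) i₀
  have hdiag : ∀ i, 0 < ⟪A (b i), b i⟫ := fun i => hA _ (b.orthonormal.ne_zero i)
  calc ⟪A w, w⟫ = ⟪A (b i₀), b i₀⟫ := by rw [hb i₀ rfl]
    _ < ∑ i, ⟪A (b i), b i⟫ :=
      Finset.single_lt_sum hj (Finset.mem_univ _) (Finset.mem_univ _) (hdiag j)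
        fun i _ _ => (hdiag i).le
    _ = trace ℝ E A := by simp_rw [trace_eq_sum_inner A b, real_inner_comm]

theorem IsPosDef.trace_smul_id_sub {A : E →ₗ[ℝ] E} (hA : A.IsPosDef)
    (hE : 2 ≤ Module.finrank ℝ E) : (trace ℝ E A • id - A).IsPosDef := by
  intro v hv
  have hv2 : 0 < ‖v‖ ^ 2 := by positivity
  have hunit := hA.inner_lt_trace hE (w := ‖v‖⁻¹ • v) (norm_smul_inv_norm hv)
  rw [map_smul, real_inner_smul_left, real_inner_smul_right, ← mul_assoc,
    ← mul_inv, ← sq, inv_mul_lt_iff₀ hv2] at hunit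
  rw [sub_apply, smul_apply, id_apply, inner_sub_left, real_inner_smul_left,
    real_inner_self_eq_norm_sq]
  linarith

end LinearMap

section SchoutenEinstein

variable {E : Type*} [NormedAddCommGroup E] [InnerProductSpace ℝ E]

noncomputable def schouten (m : ℝ) (ρ : E →ₗ[ℝ] E) : E →ₗ[ℝ] E :=
  ρ - (m * LinearMap.trace ℝ E ρ) • LinearMap.id

noncomputable def einstein (k : ℝ) (ρ : E →ₗ[ℝ] E) : E →ₗ[ℝ] E :=
  LinearMap.trace ℝ E ρ • LinearMap.id - k • ρ

theorem trace_smul_id_sub_einstein [FiniteDimensional ℝ E] (ρ : E →ₗ[ℝ] E) {k : ℝ}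
    (hk : k ≠ 0) :
    LinearMap.trace ℝ E (einstein k ρ) • LinearMap.id - einstein k ρ =
      k • schouten (1 - ((Module.finrank ℝ E : ℝ) - 1) / k) ρ := by
  simp only [einstein, schouten, map_sub, map_smul, LinearMap.trace_id, smul_eq_mul, smul_sub,
    smul_smul]
  rw [show k * ((1 - ((Module.finrank ℝ E : ℝ) - 1) / k) * LinearMap.trace ℝ E ρ) =
    (k - (Module.finrank ℝ E - 1)) * LinearMap.trace ℝ E ρ by field_simp]
  module

end SchoutenEinstein

theorem stmt_14_general {E : Type*} [NormedAddCommGroup E] [InnerProductSpace ℝ E]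
    [FiniteDimensional ℝ E] {n : ℕ} (hn : Module.finrank ℝ E = n) (hn2 : 2 ≤ n)
    (ρ : E →ₗ[ℝ] E) (S : ℝ) (hS : S = LinearMap.trace ℝ E ρ)
    {k : ℝ} (hk1 : (n : ℝ) - 1 ≤ k)
    (hpos : ∀ v : E, v ≠ 0 →
      0 < ⟪(S • (LinearMap.id : E →ₗ[ℝ] E) - k • ρ) v, v⟫) :
    ∀ v : E, v ≠ 0 →
      0 < ⟪(ρ - ((1 - ((n : ℝ) - 1) / k) * S) • (LinearMap.id : E →ₗ[ℝ] E)) v, v⟫ := by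
  subst hS hn
  have hk : 0 < k := by
    have : (2 : ℝ) ≤ Module.finrank ℝ E := by exact_mod_cast hn2
    linarith
  have hnewton := (show (einstein k ρ).IsPosDef from hpos).trace_smul_id_sub hn2
  rw [trace_smul_id_sub_einstein ρ hk.ne'] at hnewton
  exact hnewton.of_smul hk

/-- For `n-1 ≤ k < n` (`n ≥ 2`), if `Ein_k = S•id - k•ρ` is positive
definite then `Sch_{1-(n-1)/k} = ρ - (1-(n-1)/k)·S•id` is positive definite. -/
theorem stmt_14 {E : Type*} [NormedAddCommGroup E] [InnerProductSpace ℝ E]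
    [FiniteDimensional ℝ E] {n : ℕ} (hn : Module.finrank ℝ E = n) (hn2 : 2 ≤ n)
    (ρ : E →ₗ[ℝ] E) (hρ : ρ.IsSymmetric) (S : ℝ) (hS : S = LinearMap.trace ℝ E ρ)
    {k : ℝ} (hk1 : (n : ℝ) - 1 ≤ k) (hk2 : k < n)
    (hpos : ∀ v : E, v ≠ 0 →
      0 < ⟪(S • (LinearMap.id : E →ₗ[ℝ] E) - k • ρ) v, v⟫) :
    ∀ v : E, v ≠ 0 →
      0 < ⟪(ρ - ((1 - ((n : ℝ) - 1) / k) * S) • (LinearMap.id : E →ₗ[ℝ] E)) v, v⟫ :=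
  stmt_14_general hn hn2 ρ S hS hk1 hpos
end
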